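/- Assume that none of α, α−β, 2α+β+2ζ is an integer. Then for all integers 0 ≤ m ≤ N and 1 ≤ n ≤ N the contiguity relation holds: 𝒰_m(n; α−1, β−2, ζ+2, N) = [(n−α)(n−α+β) / (α(α−β))] · 𝒰_m(n; α, β, ζ, N) + [n(n−2α+β) / (α(β−α))] · 𝒰_m(n−1; α, β, ζ, N); and for n = 0 one has 𝒰_m(0; α−1, β−2, ζ+2, N) = [(−α)(−α+β) / (α(α−β))] · 𝒰_m(0; α, β, ζ, N). -/

import Mathlib

set_option maxHeartbeats 1000000


/-- The Pochhammer symbol `(a)_k = a(a+1)⋯(a+k−1)`. -/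
noncomputable def poch (a : ℝ) (k : ℕ) : ℝ := ∏ i ∈ Finset.range k, (a + i)

/-- The Racah-type rational function
`𝒰_m(n; a, b, c, N) = Σ_{k=0}^{min(m,n)} (−m)_k (−n)_k (−a)_k (m−2b−2c−1)_k /
  [(−N)_k (a−b−n)_k (N−2a−b−2c)_k k!]`. -/
noncomputable def racahRat (a b c : ℝ) (N m n : ℕ) : ℝ :=
  ∑ k ∈ Finset.range (min m n + 1),
    poch (-(m : ℝ)) k * poch (-(n : ℝ)) k * poch (-a) k
      * poch ((m : ℝ) - 2 * b - 2 * c - 1) k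
      / (poch (-(N : ℝ)) k * poch (a - b - (n : ℝ)) k
          * poch ((N : ℝ) - 2 * a - b - 2 * c) k * (Nat.factorial k : ℝ))

lemma poch_succ (a : ℝ) (k : ℕ) : poch a (k+1) = poch a k * (a + k) :=
  Finset.prod_range_succ _ _

lemma poch_succ' (a : ℝ) (k : ℕ) : poch a (k+1) = a * poch (a+1) k := by
  rw [poch, Finset.prod_range_succ']
  simp only [Nat.cast_zero, add_zero, Nat.cast_add, Nat.cast_one]
  rw [mul_comm, poch]
  congr 1
  exact Finset.prod_congr rfl fun i _ => by ring

lemma poch_shift (a : ℝ) (k : ℕ) : a * poch (a+1) k = poch a k * (a + k) := by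
  rw [← poch_succ', poch_succ]

lemma poch_ne_zero {a : ℝ} (h : ∀ z : ℤ, a ≠ z) (k : ℕ) : poch a k ≠ 0 := by
  refine Finset.prod_ne_zero_iff.mpr fun i _ h0 => h (-(i:ℤ)) ?_
  push_cast
  linarith

lemma poch_nat_ne_zero {n k : ℕ} (h : k ≤ n) : poch (-(n:ℝ)) k ≠ 0 := by
  refine Finset.prod_ne_zero_iff.mpr fun i hi h0 => ?_
  have : (i:ℝ) < (n:ℝ) := by
    exact_mod_cast lt_of_lt_of_le (Finset.mem_range.mp hi) h
  linarith

lemma poch_nat_eq_zero {n k : ℕ} (h : n < k) : poch (-(n:ℝ)) k = 0 :=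
  Finset.prod_eq_zero (Finset.mem_range.mpr h) (by simp)

/-- The contiguity relation relating `𝒰_m(n; α−1, β−2, ζ+2, N)` to
`𝒰_m(n; α, β, ζ, N)` and `𝒰_m(n−1; α, β, ζ, N)`, together with its `n = 0` version. -/
theorem racahRat_contiguity (N : ℕ) (hN : 1 ≤ N) (α β ζ : ℝ)
    (i1 : ∀ z : ℤ, α ≠ (z : ℝ))
    (i2 : ∀ z : ℤ, α - β ≠ (z : ℝ))
    (i3 : ∀ z : ℤ, 2 * α + β + 2 * ζ ≠ (z : ℝ)) :
    (∀ m n : ℕ, m ≤ N → 1 ≤ n → n ≤ N →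
      racahRat (α - 1) (β - 2) (ζ + 2) N m n
        = (((n : ℝ) - α) * ((n : ℝ) - α + β) / (α * (α - β))) * racahRat α β ζ N m n
          + ((n : ℝ) * ((n : ℝ) - 2 * α + β) / (α * (β - α)))
            * racahRat α β ζ N m (n - 1)) ∧
    (∀ m : ℕ, m ≤ N →
      racahRat (α - 1) (β - 2) (ζ + 2) N m 0
        = ((-α) * (-α + β) / (α * (α - β))) * racahRat α β ζ N m 0) := by
  have hα : α ≠ 0 := fun h => i1 0 (by simpa using h)
  have hαβ : α - β ≠ 0 := fun h => i2 0 (by simpa using h)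
  constructor
  · intro m n hm hn1 hnN
    have hcast : ((n-1:ℕ):ℝ) = (n:ℝ) - 1 := by
      push_cast [hn1]; ring
    -- extend the (n-1)-sum to the larger range
    have hsub : Finset.range (min m (n-1) + 1) ⊆ Finset.range (min m n + 1) :=
      Finset.range_subset_range.mpr (by omega)
    have hext : racahRat α β ζ N m (n-1)
        = ∑ k ∈ Finset.range (min m n + 1),
            poch (-(m : ℝ)) k * poch (-((n-1:ℕ) : ℝ)) k * poch (-α) k
              * poch ((m : ℝ) - 2 * β - 2 * ζ - 1) k
              / (poch (-(N : ℝ)) k * poch (α - β - ((n-1:ℕ) : ℝ)) k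
                  * poch ((N : ℝ) - 2 * α - β - 2 * ζ) k * (Nat.factorial k : ℝ)) := by
      rw [racahRat]
      refine Finset.sum_subset hsub fun k hk hk' => ?_
      simp only [Finset.mem_range] at hk hk'
      have h2 : (n-1:ℕ) < k := by omega
      rw [poch_nat_eq_zero h2]
      simp
    rw [hext]
    simp only [racahRat]
    rw [Finset.mul_sum, Finset.mul_sum, ← Finset.sum_add_distrib]
    refine Finset.sum_congr rfl fun k hk => ?_
    simp only [Finset.mem_range] at hk
    have hkm : k ≤ m := by omega
    have hkn : k ≤ n := by omega
    have hkN : k ≤ N := by omega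
    rw [hcast]
    rw [show -(α-1) = -α + 1 from by ring]
    rw [show (m:ℝ) - 2*(β-2) - 2*(ζ+2) - 1 = (m:ℝ) - 2*β - 2*ζ - 1 from by ring]
    rw [show α - 1 - (β-2) - (n:ℝ) = α - β - (n:ℝ) + 1 from by ring]
    rw [show (N:ℝ) - 2*(α-1) - (β-2) - 2*(ζ+2) = (N:ℝ) - 2*α - β - 2*ζ from by ring]
    rw [show -((n:ℝ)-1) = -(n:ℝ) + 1 from by ring]
    rw [show α - β - ((n:ℝ)-1) = α - β - (n:ℝ) + 1 from by ring]
    -- shift identities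
    have hn0 : (n:ℝ) ≠ 0 := by positivity
    have hC0 : α - β - (n:ℝ) ≠ 0 := fun h => i2 (n:ℤ) (by push_cast; linarith)
    have hβα : β - α ≠ 0 := fun h => hαβ (by linarith [sub_eq_zero.mp h])
    have hPN : poch (-(N:ℝ)) k ≠ 0 := poch_nat_ne_zero hkN
    have hPC : poch (α - β - (n:ℝ)) k ≠ 0 :=
      poch_ne_zero (fun z hz => i2 (z + (n:ℤ)) (by push_cast; linarith)) k
    have hPC' : poch (α - β - (n:ℝ) + 1) k ≠ 0 :=
      poch_ne_zero (fun z hz => i2 (z + (n:ℤ) - 1) (by push_cast; linarith)) k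
    have hPD : poch ((N:ℝ) - 2*α - β - 2*ζ) k ≠ 0 :=
      poch_ne_zero (fun z hz => i3 ((N:ℤ) - z) (by push_cast; linarith)) k
    have hF : (Nat.factorial k : ℝ) ≠ 0 := by positivity
    have r1 : (-α) * poch (-α + 1) k = poch (-α) k * (-α + k) := poch_shift (-α) k
    have r2 : (α - β - (n:ℝ)) * poch (α - β - (n:ℝ) + 1) k
        = poch (α - β - (n:ℝ)) k * (α - β - (n:ℝ) + k) := poch_shift (α - β - (n:ℝ)) k
    have r3 : (-(n:ℝ)) * poch (-(n:ℝ) + 1) k = poch (-(n:ℝ)) k * (-(n:ℝ) + k) :=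
      poch_shift (-(n:ℝ)) k
    set Pm := poch (-(m:ℝ)) k
    set Pn := poch (-(n:ℝ)) k
    set Pa := poch (-α) k
    set PM := poch ((m:ℝ) - 2*β - 2*ζ - 1) k
    set PNv := poch (-(N:ℝ)) k
    set PC := poch (α - β - (n:ℝ)) k
    set PD := poch ((N:ℝ) - 2*α - β - 2*ζ) k
    set F := (Nat.factorial k : ℝ)
    set Pa' := poch (-α + 1) k
    set PC' := poch (α - β - (n:ℝ) + 1) k
    set Pn' := poch (-(n:ℝ) + 1) k
    have hc : α * (n:ℝ) * (α - β - (n:ℝ)) ≠ 0 := by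
      exact mul_ne_zero (mul_ne_zero hα hn0) hC0
    have E0 : α * (n:ℝ) * (α - β - (n:ℝ))
        * (-(α*(α-β))*(Pn*PC*Pa') + ((n:ℝ)-α)*((n:ℝ)-α+β)*(Pn*Pa*PC')
            - (n:ℝ)*((n:ℝ)-2*α+β)*(Pa*PC*Pn')) = 0 := by
      linear_combination (α*(α-β)*(n:ℝ)*(α-β-(n:ℝ))*Pn*PC) * r1
        + (α*(n:ℝ)*((n:ℝ)-α)*((n:ℝ)-α+β)*Pn*Pa) * r2
        + (α*(n:ℝ)*(α-β-(n:ℝ))*((n:ℝ)-2*α+β)*Pa*PC) * r3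
    have E : -(α*(α-β))*(Pn*PC*Pa') + ((n:ℝ)-α)*((n:ℝ)-α+β)*(Pn*Pa*PC')
        - (n:ℝ)*((n:ℝ)-2*α+β)*(Pa*PC*Pn') = 0 :=
      (mul_eq_zero.mp E0).resolve_left hc
    field_simp
    linear_combination (Pm*PM*(α-β)) * E
  · intro m hm
    have h0 : racahRat (α-1) (β-2) (ζ+2) N m 0 = 1 := by
      simp [racahRat, poch]
    have h1 : racahRat α β ζ N m 0 = 1 := by
      simp [racahRat, poch]
    rw [h0, h1, mul_one]
    field_simp
    ring
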